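/- With Δ(y, θ_0) = y − (I − θ_0 L)^{−1} R_1(y, θ_0), the random vectors Δ(y, θ_0) and R_1(y, θ_0) are independent; consequently, the selection event {A y ≤ b} can be written as {A (I − θ_0 L)^{−1} R_1 + A Δ ≤ b}, where conditional on Δ = δ the constraint is a polyhedral constraint on R_1 alone. -/

import Mathlib

open Matrix MeasureTheory ProbabilityTheory
open scoped ENNReal NNReal

/-!
Under the model, `R₁ = (I - P_Z) ε` and `Δ = (I - θ₀L)⁻¹ (θ₀ζ + Zγ + P_Z ε)`, so `Δ` is an
affine function of `P_Z ε`. The pair `(P_Z ε, (I - P_Z) ε)` is a linear image of the Gaussian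
vector `ε`, hence jointly Gaussian, with cross-covariance `σ² P_Z (I - P_Z)ᵀ = 0` since `P_Z` is
an orthogonal projection; uncorrelated jointly Gaussian vectors are independent. The selection
rewrite is the identity `y = (I - θ₀L)⁻¹ R₁ + Δ`.
-/

namespace Matrix

variable {R n : Type*} [Ring R] [Fintype n] [DecidableEq n]

lemma mul_one_sub_transpose_eq_zero {P : Matrix n n R} (hsymm : Pᵀ = P) (hidem : P * P = P) :
    P * (1 - P)ᵀ = 0 := by
  rw [transpose_sub, transpose_one, hsymm, mul_sub, mul_one, hidem, sub_self]

end Matrix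

section LinearModel

variable {R n p : Type*} [CommRing R] [Fintype n] [DecidableEq n] [Fintype p]
variable {L PZ : Matrix n n R} {Z : Matrix n p R} {ζ y e : n → R} {γ : p → R} {θ : R}

lemma one_sub_mulVec_sub_eq_of_model (hPZ : PZ * Z = Z)
    (hmodel : y = θ • (L *ᵥ y + ζ) + Z *ᵥ γ + e) :
    (1 - PZ) *ᵥ (y - θ • (L *ᵥ y + ζ)) = (1 - PZ) *ᵥ e := by
  have hZ : (1 - PZ) * Z = 0 := by rw [Matrix.sub_mul, Matrix.one_mul, hPZ, sub_self]
  rw [show y - θ • (L *ᵥ y + ζ) = Z *ᵥ γ + e by nth_rewrite 1 [hmodel]; abel,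
    mulVec_add, mulVec_mulVec, hZ, zero_mulVec, zero_add]

lemma sub_inv_mulVec_eq_of_model (hM : IsUnit (1 - θ • L))
    (hmodel : y = θ • (L *ᵥ y + ζ) + Z *ᵥ γ + e) :
    y - (1 - θ • L)⁻¹ *ᵥ ((1 - PZ) *ᵥ e) = (1 - θ • L)⁻¹ *ᵥ (θ • ζ + Z *ᵥ γ + PZ *ᵥ e) := by
  have hdet : IsUnit (1 - θ • L).det := (isUnit_iff_isUnit_det _).mp hM
  have hMy : (1 - θ • L) *ᵥ y = θ • ζ + Z *ᵥ γ + e := by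
    rw [sub_mulVec, one_mulVec, smul_mulVec]
    nth_rewrite 1 [hmodel]
    rw [smul_add]
    abel
  calc y - (1 - θ • L)⁻¹ *ᵥ ((1 - PZ) *ᵥ e)
      = (1 - θ • L)⁻¹ *ᵥ ((1 - θ • L) *ᵥ y - (1 - PZ) *ᵥ e) := by
        rw [mulVec_sub, mulVec_mulVec y, nonsing_inv_mul _ hdet, one_mulVec]
    _ = (1 - θ • L)⁻¹ *ᵥ (θ • ζ + Z *ᵥ γ + PZ *ᵥ e) := by
        rw [hMy, sub_mulVec, one_mulVec]
        abel_nf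

end LinearModel

namespace ProbabilityTheory

instance isGaussian_pi {ι : Type*} [Fintype ι] {E : ι → Type*}
    [∀ i, NormedAddCommGroup (E i)] [∀ i, NormedSpace ℝ (E i)] [∀ i, MeasurableSpace (E i)]
    [∀ i, CompleteSpace (E i)] [∀ i, BorelSpace (E i)] [∀ i, SecondCountableTopology (E i)]
    (μ : ∀ i, Measure (E i)) [∀ i, IsGaussian (μ i)] : IsGaussian (Measure.pi μ) := by
  have h := (iIndepFun_pi (μ := μ) (X := fun _ => id) fun _ => aemeasurable_id).hasGaussianLaw
    fun i => (measurePreserving_eval μ i).hasLaw.hasGaussianLaw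
  simpa using h.isGaussian_map

lemma covariance_eval_pi {ι : Type*} [Fintype ι] [DecidableEq ι] (μ : ι → Measure ℝ)
    [∀ i, IsProbabilityMeasure (μ i)] (hμ : ∀ i, MemLp id 2 (μ i)) (k l : ι) :
    cov[fun x => x k, fun x => x l; Measure.pi μ] = diagonal (fun i => Var[id; μ i]) k l := by
  have hmem : ∀ i, MemLp (fun x : ι → ℝ => x i) 2 (Measure.pi μ) := fun i =>
    (hμ i).comp_measurePreserving (measurePreserving_eval μ i)
  rw [diagonal_apply]
  split_ifs with hkl
  · subst hkl
    rw [covariance_self (hmem k).aemeasurable, (measurePreserving_eval μ k).hasLaw.variance_eq]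
  · exact ((iIndepFun_pi (μ := μ) (X := fun _ => id) fun _ => aemeasurable_id).indepFun
      hkl).covariance_eq_zero (hmem k) (hmem l)

variable {Ω ι κ κ' : Type*} [MeasurableSpace Ω] {P : Measure Ω} [Fintype ι]

lemma covariance_mulVec_mulVec [IsFiniteMeasure P] {X : Ω → ι → ℝ}
    (hX : ∀ k, MemLp (fun ω => X ω k) 2 P)
    {C : Matrix ι ι ℝ} (hC : ∀ k l, cov[fun ω => X ω k, fun ω => X ω l; P] = C k l)
    (A : Matrix κ ι ℝ) (B : Matrix κ' ι ℝ) (i : κ) (j : κ') :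
    cov[fun ω => (A *ᵥ X ω) i, fun ω => (B *ᵥ X ω) j; P] = (A * C * Bᵀ) i j := by
  simp only [mulVec, dotProduct]
  rw [covariance_fun_sum_fun_sum (fun k => (hX k).const_mul _) (fun l => (hX l).const_mul _)]
  simp only [covariance_const_mul_left, covariance_const_mul_right, hC, mul_apply,
    transpose_apply, Finset.sum_mul]
  rw [Finset.sum_comm]
  refine Finset.sum_congr rfl fun l _ => Finset.sum_congr rfl fun k _ => ?_
  ring

lemma HasGaussianLaw.indepFun_mulVec [Fintype κ] [Fintype κ'] {X : Ω → ι → ℝ}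
    (hX : HasGaussianLaw X P)
    {C : Matrix ι ι ℝ} (hC : ∀ k l, cov[fun ω => X ω k, fun ω => X ω l; P] = C k l)
    {A : Matrix κ ι ℝ} {B : Matrix κ' ι ℝ} (hAB : A * C * Bᵀ = 0) :
    IndepFun (fun ω => A *ᵥ X ω) (fun ω => B *ᵥ X ω) P := by
  classical
  have := hX.isProbabilityMeasure
  have hpair : HasGaussianLaw (fun ω => (A *ᵥ X ω, B *ᵥ X ω)) P :=
    hX.map_fun ((toLin' A).toContinuousLinearMap.prod (toLin' B).toContinuousLinearMap)
  refine hpair.indepFun_of_covariance_eval fun i j => ?_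
  rw [covariance_mulVec_mulVec (fun k => hX.memLp_two.eval k) hC, hAB, Matrix.zero_apply]

end ProbabilityTheory

theorem delta_indep_residual_and_selection_rewrite_general
    {n pz m : ℕ} (L PZ : Matrix (Fin n) (Fin n) ℝ) (ζ : Fin n → ℝ)
    (Z : Matrix (Fin n) (Fin pz) ℝ) (γ : Fin pz → ℝ) (θ₀ : ℝ)
    (hPsymm : PZᵀ = PZ) (hPidem : PZ * PZ = PZ) (hPZ : PZ * Z = Z)
    (hM : IsUnit (1 - θ₀ • L))
    {Ω : Type*} [MeasurableSpace Ω] (P : Measure Ω) [IsProbabilityMeasure P]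
    (σ : ℝ≥0) (ε y : Ω → Fin n → ℝ) (hε : Measurable ε)
    (hεlaw : Measure.map ε P = Measure.pi fun _ : Fin n => gaussianReal 0 (σ ^ 2))
    (hmodel : ∀ ω, y ω = θ₀ • (L *ᵥ y ω + ζ) + Z *ᵥ γ + ε ω)
    (R1 Δ : Ω → Fin n → ℝ)
    (hR1 : ∀ ω, R1 ω = (1 - PZ) *ᵥ (y ω - θ₀ • (L *ᵥ y ω + ζ)))
    (hΔ : ∀ ω, Δ ω = y ω - (1 - θ₀ • L)⁻¹ *ᵥ R1 ω)
    (A : Matrix (Fin m) (Fin n) ℝ) (b : Fin m → ℝ) :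
    IndepFun Δ R1 P ∧
      ∀ ω, A *ᵥ y ω ≤ b ↔
        A *ᵥ ((1 - θ₀ • L)⁻¹ *ᵥ R1 ω) + A *ᵥ Δ ω ≤ b := by
  have hR1ε : R1 = fun ω => (1 - PZ) *ᵥ ε ω :=
    funext fun ω => (hR1 ω).trans (one_sub_mulVec_sub_eq_of_model hPZ (hmodel ω))
  have hΔε : Δ = (fun w => (1 - θ₀ • L)⁻¹ *ᵥ (θ₀ • ζ + Z *ᵥ γ + w)) ∘ fun ω => PZ *ᵥ ε ω :=
    funext fun ω => by rw [hΔ, hR1ε, sub_inv_mulVec_eq_of_model hM (hmodel ω), Function.comp_apply]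
  have hlaw : HasLaw ε (Measure.pi fun _ : Fin n => gaussianReal 0 (σ ^ 2)) P :=
    ⟨hε.aemeasurable, hεlaw⟩
  have hcov : ∀ k l, cov[fun ω => ε ω k, fun ω => ε ω l; P] =
      diagonal (fun _ => ((σ ^ 2 : ℝ≥0) : ℝ)) k l := fun k l => by
    rw [hlaw.covariance_fun_comp (measurable_pi_apply k).aemeasurable
      (measurable_pi_apply l).aemeasurable,
      covariance_eval_pi _ (fun _ => memLp_id_gaussianReal 2), variance_id_gaussianReal]
  have hind : IndepFun (fun ω => PZ *ᵥ ε ω) (fun ω => (1 - PZ) *ᵥ ε ω) P :=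
    hlaw.hasGaussianLaw.indepFun_mulVec hcov <| by
      rw [← smul_one_eq_diagonal, Matrix.mul_smul, Matrix.mul_one, Matrix.smul_mul,
        mul_one_sub_transpose_eq_zero hPsymm hPidem, smul_zero]
  refine ⟨?_, fun ω => ?_⟩
  · rw [hΔε, hR1ε]
    exact hind.comp (by fun_prop) measurable_id
  · rw [hΔ ω, ← mulVec_add, add_sub_cancel]

/-- In the selective t-test setting `y = θ₀(Ly + ζ) + Zγ + ε`,
`ε ~ N(0, σ²I)`, with `R₁ = (I - P_Z)(y - θ₀(Ly + ζ))` and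
`Δ = y - (I - θ₀L)⁻¹ R₁`, the random vectors `Δ` and `R₁` are independent,
and the selection event `{A y ≤ b}` is exactly
`{A (I - θ₀L)⁻¹ R₁ + A Δ ≤ b}`: conditional on `Δ = δ` it is a polyhedral
constraint on `R₁` alone. -/
theorem delta_indep_residual_and_selection_rewrite
    {n pz m : ℕ} (L PZ : Matrix (Fin n) (Fin n) ℝ) (ζ : Fin n → ℝ)
    (Z : Matrix (Fin n) (Fin pz) ℝ) (γ : Fin pz → ℝ) (θ₀ : ℝ)
    (hPsymm : PZᵀ = PZ) (hPidem : PZ * PZ = PZ) (hPZ : PZ * Z = Z)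
    (hM : IsUnit (1 - θ₀ • L))
    {Ω : Type*} [MeasurableSpace Ω] (P : Measure Ω) [IsProbabilityMeasure P]
    (σ : ℝ≥0) (ε y : Ω → Fin n → ℝ) (hε : Measurable ε) (hy : Measurable y)
    (hεlaw : Measure.map ε P = Measure.pi fun _ : Fin n => gaussianReal 0 (σ ^ 2))
    (hmodel : ∀ ω, y ω = θ₀ • (L *ᵥ y ω + ζ) + Z *ᵥ γ + ε ω)
    (R1 Δ : Ω → Fin n → ℝ)
    (hR1 : ∀ ω, R1 ω = (1 - PZ) *ᵥ (y ω - θ₀ • (L *ᵥ y ω + ζ)))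
    (hΔ : ∀ ω, Δ ω = y ω - (1 - θ₀ • L)⁻¹ *ᵥ R1 ω)
    (A : Matrix (Fin m) (Fin n) ℝ) (b : Fin m → ℝ) :
    IndepFun Δ R1 P ∧
      ∀ ω, A *ᵥ y ω ≤ b ↔
        A *ᵥ ((1 - θ₀ • L)⁻¹ *ᵥ R1 ω) + A *ᵥ Δ ω ≤ b :=
  delta_indep_residual_and_selection_rewrite_general L PZ ζ Z γ θ₀ hPsymm hPidem hPZ hM P σ ε y hε
    hεlaw hmodel R1 Δ hR1 hΔ A b
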